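/- Let μ_S and μ_T be probability measures on a measurable space X, let ℓ_c and ℓ_r be loss functions (jointly measurable, nonnegative, symmetric, satisfying the pointwise triangle inequality, bounded by J ≥ 0), let F and G be sets of measurable functions X → ℝ, and let h_c, h_r : X → ℝ be measurable labeling functions. Define the risk R_μ(f, g) = (1/2) (L^{ℓ_c}_μ(f, h_c) + L^{ℓ_r}_μ(g, h_r)) and the discrepancy disc(μ_S, μ_T) = ⨆_{f, f' ∈ F} |L^{ℓ_c}_{μ_S}(f, f') − L^{ℓ_c}_{μ_T}(f, f')| + ⨆_{g, g' ∈ G} |L^{ℓ_r}_{μ_S}(g, g') − L^{ℓ_r}_{μ_T}(g, g')|. Then for every f, f* ∈ F and g, g* ∈ G, R_{μ_T}(f, g) ≤ R_{μ_S}(f, g) + (1/2) disc(μ_S, μ_T) + λ*, where λ* = R_{μ_T}(f*, g*) + R_{μ_S}(f*, g*). -/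

import Mathlib

/-!
The classification and regression halves of the risk are bounded separately, by the same
argument. For a symmetric loss obeying the triangle inequality and any `f, f* ∈ F`,
`L_T(f, h) ≤ L_T(f, f*) + L_T(f*, h)`; the discrepancy moves `L_T(f, f*)` to
`L_S(f, f*) + disc`; and `L_S(f, f*) ≤ L_S(f, h) + L_S(f*, h)`. Averaging the two halves
gives the bound, with `λ*` collecting the terms in `f*` and `g*`.
-/

open MeasureTheory

/-- Expected loss of a pair of functions under a measure. -/
noncomputable def expLoss {X : Type*} [MeasurableSpace X] (ℓ : ℝ → ℝ → ℝ)
    (μ : Measure X) (f f' : X → ℝ) : ℝ := ∫ x, ℓ (f x) (f' x) ∂μ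

/-- The discrepancy distance between two measures over one hypothesis class. -/
noncomputable def discOne {X : Type*} [MeasurableSpace X] (ℓ : ℝ → ℝ → ℝ)
    (F : Set (X → ℝ)) (μ ν : Measure X) : ℝ :=
  sSup {d : ℝ | ∃ f₁ ∈ F, ∃ f₂ ∈ F, d = |expLoss ℓ μ f₁ f₂ - expLoss ℓ ν f₁ f₂|}

/-- The discrepancy of Definition 2.2: classification-class discrepancy plus
regression-class discrepancy. -/
noncomputable def disc {X : Type*} [MeasurableSpace X] (ℓc ℓr : ℝ → ℝ → ℝ)
    (F G : Set (X → ℝ)) (μ ν : Measure X) : ℝ :=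
  discOne ℓc F μ ν + discOne ℓr G μ ν

/-- The risk of a classifier–regressor pair `(f, g)` under labeling functions
`(hc, hr)`. -/
noncomputable def risk {X : Type*} [MeasurableSpace X] (ℓc ℓr : ℝ → ℝ → ℝ)
    (hc hr : X → ℝ) (μ : Measure X) (f g : X → ℝ) : ℝ :=
  (1 / 2) * (expLoss ℓc μ f hc + expLoss ℓr μ g hr)

section Loss

variable {X : Type*} [MeasurableSpace X] {ℓ : ℝ → ℝ → ℝ} {μ ν : Measure X} {J : ℝ}
  {f f' h : X → ℝ}

lemma integrable_loss_comp [IsFiniteMeasure μ] (hmeas : Measurable (Function.uncurry ℓ))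
    (hnn : ∀ a b, 0 ≤ ℓ a b) (hb : ∀ a b, ℓ a b ≤ J) (hf : Measurable f) (hf' : Measurable f') :
    Integrable (fun x => ℓ (f x) (f' x)) μ :=
  .of_bound (hmeas.comp (hf.prodMk hf')).aestronglyMeasurable J <|
    .of_forall fun x => by rw [Real.norm_of_nonneg (hnn _ _)]; exact hb _ _

lemma expLoss_nonneg (hnn : ∀ a b, 0 ≤ ℓ a b) : 0 ≤ expLoss ℓ μ f f' :=
  integral_nonneg fun _ => hnn _ _

lemma expLoss_le [IsProbabilityMeasure μ] (hmeas : Measurable (Function.uncurry ℓ))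
    (hnn : ∀ a b, 0 ≤ ℓ a b) (hb : ∀ a b, ℓ a b ≤ J) (hf : Measurable f) (hf' : Measurable f') :
    expLoss ℓ μ f f' ≤ J := by
  simpa [expLoss] using integral_mono (integrable_loss_comp (μ := μ) hmeas hnn hb hf hf')
    (integrable_const J) fun x => hb (f x) (f' x)

lemma expLoss_comm (hsymm : ∀ a b, ℓ a b = ℓ b a) : expLoss ℓ μ f f' = expLoss ℓ μ f' f :=
  integral_congr_ae (.of_forall fun x => hsymm (f x) (f' x))

lemma expLoss_triangle [IsFiniteMeasure μ] (hmeas : Measurable (Function.uncurry ℓ))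
    (hnn : ∀ a b, 0 ≤ ℓ a b) (hb : ∀ a b, ℓ a b ≤ J) (htri : ∀ a b c, ℓ a c ≤ ℓ a b + ℓ b c)
    (hf : Measurable f) (hf' : Measurable f') (hh : Measurable h) :
    expLoss ℓ μ f h ≤ expLoss ℓ μ f f' + expLoss ℓ μ f' h := by
  have hff' := integrable_loss_comp (μ := μ) hmeas hnn hb hf hf'
  have hf'h := integrable_loss_comp (μ := μ) hmeas hnn hb hf' hh
  rw [expLoss, expLoss, expLoss, ← integral_add hff' hf'h]
  exact integral_mono (integrable_loss_comp hmeas hnn hb hf hh) (hff'.add hf'h)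
    fun x => htri (f x) (f' x) (h x)

lemma abs_expLoss_sub_le_discOne [IsProbabilityMeasure μ] [IsProbabilityMeasure ν]
    (hmeas : Measurable (Function.uncurry ℓ)) (hnn : ∀ a b, 0 ≤ ℓ a b) (hb : ∀ a b, ℓ a b ≤ J)
    {F : Set (X → ℝ)} (hF : ∀ f ∈ F, Measurable f) (hf : f ∈ F) (hf' : f' ∈ F) :
    |expLoss ℓ μ f f' - expLoss ℓ ν f f'| ≤ discOne ℓ F μ ν := by
  refine le_csSup ⟨J, ?_⟩ ⟨f, hf, f', hf', rfl⟩
  rintro d ⟨g, hg, g', hg', rfl⟩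
  exact abs_sub_le_of_nonneg_of_le (expLoss_nonneg hnn)
    (expLoss_le hmeas hnn hb (hF g hg) (hF g' hg')) (expLoss_nonneg hnn)
    (expLoss_le hmeas hnn hb (hF g hg) (hF g' hg'))

lemma expLoss_le_expLoss_add_discOne_add [IsProbabilityMeasure μ] [IsProbabilityMeasure ν]
    (hmeas : Measurable (Function.uncurry ℓ)) (hnn : ∀ a b, 0 ≤ ℓ a b)
    (hsymm : ∀ a b, ℓ a b = ℓ b a) (htri : ∀ a b c, ℓ a c ≤ ℓ a b + ℓ b c)
    (hb : ∀ a b, ℓ a b ≤ J) {F : Set (X → ℝ)} (hF : ∀ f ∈ F, Measurable f)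
    (hh : Measurable h) {fstar : X → ℝ} (hf : f ∈ F) (hfstar : fstar ∈ F) :
    expLoss ℓ ν f h ≤
      expLoss ℓ μ f h + discOne ℓ F μ ν + (expLoss ℓ ν fstar h + expLoss ℓ μ fstar h) := by
  have hT : expLoss ℓ ν f h ≤ expLoss ℓ ν f fstar + expLoss ℓ ν fstar h :=
    expLoss_triangle hmeas hnn hb htri (hF f hf) (hF fstar hfstar) hh
  have hdisc : expLoss ℓ ν f fstar ≤ expLoss ℓ μ f fstar + discOne ℓ F μ ν :=
    sub_le_iff_le_add'.mp ((abs_sub_le_iff.mp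
      (abs_expLoss_sub_le_discOne hmeas hnn hb hF hf hfstar)).2)
  have hS : expLoss ℓ μ f fstar ≤ expLoss ℓ μ f h + expLoss ℓ μ fstar h := by
    rw [expLoss_comm (f := fstar) hsymm]
    exact expLoss_triangle hmeas hnn hb htri (hF f hf) hh (hF fstar hfstar)
  linarith

end Loss

theorem risk_transfer_general {X : Type*} [MeasurableSpace X]
    (μS μT : Measure X) [IsProbabilityMeasure μS] [IsProbabilityMeasure μT]
    (ℓc ℓr : ℝ → ℝ → ℝ) (J : ℝ)
    (hmeasc : Measurable (Function.uncurry ℓc))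
    (hmeasr : Measurable (Function.uncurry ℓr))
    (hnonnegc : ∀ a b, 0 ≤ ℓc a b) (hnonnegr : ∀ a b, 0 ≤ ℓr a b)
    (hsymmc : ∀ a b, ℓc a b = ℓc b a) (hsymmr : ∀ a b, ℓr a b = ℓr b a)
    (htric : ∀ a b c, ℓc a c ≤ ℓc a b + ℓc b c)
    (htrir : ∀ a b c, ℓr a c ≤ ℓr a b + ℓr b c)
    (hboundc : ∀ a b, ℓc a b ≤ J) (hboundr : ∀ a b, ℓr a b ≤ J)
    (F G : Set (X → ℝ)) (hF : ∀ f ∈ F, Measurable f) (hG : ∀ g ∈ G, Measurable g)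
    (hc hr : X → ℝ) (hhc : Measurable hc) (hhr : Measurable hr)
    (f : X → ℝ) (hfF : f ∈ F) (fstar : X → ℝ) (hfstarF : fstar ∈ F)
    (g : X → ℝ) (hgG : g ∈ G) (gstar : X → ℝ) (hgstarG : gstar ∈ G) :
    risk ℓc ℓr hc hr μT f g ≤
      risk ℓc ℓr hc hr μS f g + (1 / 2) * disc ℓc ℓr F G μS μT +
        (risk ℓc ℓr hc hr μT fstar gstar + risk ℓc ℓr hc hr μS fstar gstar) := by
  have hclass := expLoss_le_expLoss_add_discOne_add (μ := μS) (ν := μT)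
    hmeasc hnonnegc hsymmc htric hboundc hF hhc hfF hfstarF
  have hregr := expLoss_le_expLoss_add_discOne_add (μ := μS) (ν := μT)
    hmeasr hnonnegr hsymmr htrir hboundr hG hhr hgG hgstarG
  simp only [risk, disc]
  linarith

/-- Distribution-level form of Theorem 2.1: the test risk is bounded by the
selected-set risk, half the discrepancy, and the joint risk `λ*` of the optimal
hypotheses. -/
theorem risk_transfer {X : Type*} [MeasurableSpace X]
    (μS μT : Measure X) [IsProbabilityMeasure μS] [IsProbabilityMeasure μT]
    (ℓc ℓr : ℝ → ℝ → ℝ) (J : ℝ) (hJ : 0 ≤ J)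
    (hmeasc : Measurable (Function.uncurry ℓc))
    (hmeasr : Measurable (Function.uncurry ℓr))
    (hnonnegc : ∀ a b, 0 ≤ ℓc a b) (hnonnegr : ∀ a b, 0 ≤ ℓr a b)
    (hsymmc : ∀ a b, ℓc a b = ℓc b a) (hsymmr : ∀ a b, ℓr a b = ℓr b a)
    (htric : ∀ a b c, ℓc a c ≤ ℓc a b + ℓc b c)
    (htrir : ∀ a b c, ℓr a c ≤ ℓr a b + ℓr b c)
    (hboundc : ∀ a b, ℓc a b ≤ J) (hboundr : ∀ a b, ℓr a b ≤ J)
    (F G : Set (X → ℝ)) (hF : ∀ f ∈ F, Measurable f) (hG : ∀ g ∈ G, Measurable g)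
    (hc hr : X → ℝ) (hhc : Measurable hc) (hhr : Measurable hr)
    (f : X → ℝ) (hfF : f ∈ F) (fstar : X → ℝ) (hfstarF : fstar ∈ F)
    (g : X → ℝ) (hgG : g ∈ G) (gstar : X → ℝ) (hgstarG : gstar ∈ G) :
    risk ℓc ℓr hc hr μT f g ≤
      risk ℓc ℓr hc hr μS f g + (1 / 2) * disc ℓc ℓr F G μS μT +
        (risk ℓc ℓr hc hr μT fstar gstar + risk ℓc ℓr hc hr μS fstar gstar) :=
  risk_transfer_general μS μT ℓc ℓr J hmeasc hmeasr hnonnegc hnonnegr hsymmc hsymmr htric htrir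
    hboundc hboundr F G hF hG hc hr hhc hhr f hfF fstar hfstarF g hgG gstar hgstarG
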